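/- On $\mathbb{R}^9$ with coordinates $(P_1,P_2,Q_1,Q_2,p_1,p_2,q_1,q_2,t)$, let $\omega = \omega_S + dH\wedge dt$ where $\omega_S = dQ_1\wedge dQ_2 + \rho\, dq_1\wedge dq_2$ and $H$ is a smooth function of $(Q_1,Q_2,q_1,q_2,t)$, and let $\alpha_0, \beta_0 : \mathbb{R}^9 \to \mathbb{R}^5$ be the maps $\alpha_0 = (Q_1 + \tfrac12 P_2, Q_2 - \tfrac12 P_1, q_1 + \tfrac{1}{2\rho}p_2, q_2 - \tfrac{1}{2\rho}p_1, t)$ and $\beta_0 = (Q_1 - \tfrac12 P_2, Q_2 + \tfrac12 P_1, q_1 - \tfrac{1}{2\rho}p_2, q_2 + \tfrac{1}{2\rho}p_1, t)$. Then $\alpha_0^*\omega - \beta_0^*\omega = d\big(P_1\,dQ_1 + P_2\,dQ_2 + p_1\,dq_1 + p_2\,dq_2 + \alpha_0^*(H\,dt) - \beta_0^*(H\,dt)\big)$; in particular $\alpha_0^*\omega - \beta_0^*\omega$ is an exact 2-form. -/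

import Mathlib

noncomputable section

/-- Base coordinates `(Q₁,Q₂,q₁,q₂,t)`. -/
abbrev Base5 : Type := Fin 5 → ℝ

/-- Groupoid coordinates `(P₁,P₂,Q₁,Q₂,p₁,p₂,q₁,q₂,t)`. -/
abbrev Tot9 : Type := Fin 9 → ℝ

/-- The source map `α₀`. -/
def srcMap (ρ : ℝ) (g : Tot9) : Base5 :=
  ![g 2 + g 1 / 2, g 3 - g 0 / 2, g 6 + g 5 / (2 * ρ), g 7 - g 4 / (2 * ρ), g 8]

/-- The target map `β₀`. -/
def tgtMap (ρ : ℝ) (g : Tot9) : Base5 :=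
  ![g 2 - g 1 / 2, g 3 + g 0 / 2, g 6 - g 5 / (2 * ρ), g 7 + g 4 / (2 * ρ), g 8]

/-- The 2-form `ω = dQ₁∧dQ₂ + ρ dq₁∧dq₂ + dH∧dt` on `ℝ⁵`, evaluated at `x` on `u, v`. -/
def omega2 (ρ : ℝ) (H : Base5 → ℝ) (x : Base5) (u v : Base5) : ℝ :=
  (u 0 * v 1 - u 1 * v 0) + ρ * (u 2 * v 3 - u 3 * v 2)
    + (fderiv ℝ H x u * v 4 - fderiv ℝ H x v * u 4)

/-- Pullback of a 2-form on `ℝ⁵` by a map `F : ℝ⁹ → ℝ⁵`. -/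
def pb2 (F : Tot9 → Base5) (ω : Base5 → Base5 → Base5 → ℝ) (x : Tot9) (u v : Tot9) : ℝ :=
  ω (F x) (fderiv ℝ F x u) (fderiv ℝ F x v)

/-- The 1-form `λ = P₁dQ₁ + P₂dQ₂ + p₁dq₁ + p₂dq₂ + α₀*(H dt) - β₀*(H dt)` on `ℝ⁹`. -/
def lam (ρ : ℝ) (H : Base5 → ℝ) (x : Tot9) (u : Tot9) : ℝ :=
  x 0 * u 2 + x 1 * u 3 + x 4 * u 6 + x 5 * u 7
    + H (srcMap ρ x) * u 8 - H (tgtMap ρ x) * u 8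

/-- Exterior derivative of a 1-form on `ℝ⁹` evaluated on constant vectors `u, v`. -/
def d1 (lam : Tot9 → Tot9 → ℝ) (x : Tot9) (u v : Tot9) : ℝ :=
  fderiv ℝ (fun y => lam y v) x u - fderiv ℝ (fun y => lam y u) x v

/-- `α₀` as a continuous linear map. -/
def srcL (ρ : ℝ) : Tot9 →L[ℝ] Base5 :=
  LinearMap.toContinuousLinearMap
    { toFun := srcMap ρ
      map_add' := by
        intro a b; funext i; fin_cases i <;> simp [srcMap, Pi.add_apply] <;> ring
      map_smul' := by
        intro c a; funext i; fin_cases i <;>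
          simp [srcMap, Pi.smul_apply, smul_eq_mul] <;> ring }

/-- `β₀` as a continuous linear map. -/
def tgtL (ρ : ℝ) : Tot9 →L[ℝ] Base5 :=
  LinearMap.toContinuousLinearMap
    { toFun := tgtMap ρ
      map_add' := by
        intro a b; funext i; fin_cases i <;> simp [tgtMap, Pi.add_apply] <;> ring
      map_smul' := by
        intro c a; funext i; fin_cases i <;>
          simp [tgtMap, Pi.smul_apply, smul_eq_mul] <;> ring }

lemma srcMap_eq_srcL (ρ : ℝ) : srcMap ρ = ⇑(srcL ρ) := rfl
lemma tgtMap_eq_tgtL (ρ : ℝ) : tgtMap ρ = ⇑(tgtL ρ) := rfl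

lemma fderiv_srcMap (ρ : ℝ) (x : Tot9) : fderiv ℝ (srcMap ρ) x = srcL ρ :=
  (srcL ρ).fderiv

lemma fderiv_tgtMap (ρ : ℝ) (x : Tot9) : fderiv ℝ (tgtMap ρ) x = tgtL ρ :=
  (tgtL ρ).fderiv

/-- Derivative of `y ↦ lam ρ H y v` at `x`, applied to `u`. -/
lemma fderiv_lam (ρ : ℝ) (H : Base5 → ℝ) (hH : Differentiable ℝ H)
    (x u v : Tot9) :
    fderiv ℝ (fun y => lam ρ H y v) x u
      = u 0 * v 2 + u 1 * v 3 + u 4 * v 6 + u 5 * v 7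
        + fderiv ℝ H (srcMap ρ x) (srcMap ρ u) * v 8
        - fderiv ℝ H (tgtMap ρ x) (tgtMap ρ u) * v 8 := by
  have hproj : ∀ i : Fin 9, HasFDerivAt (fun y : Tot9 => y i)
      (ContinuousLinearMap.proj i : Tot9 →L[ℝ] ℝ) x := fun i => hasFDerivAt_apply i x
  have hsrc : HasFDerivAt (fun y : Tot9 => H (srcMap ρ y))
      ((fderiv ℝ H (srcMap ρ x)).comp (srcL ρ)) x := by
    have := (hH (srcMap ρ x)).hasFDerivAt.comp x ((srcL ρ).hasFDerivAt (x := x))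
    exact this
  have htgt : HasFDerivAt (fun y : Tot9 => H (tgtMap ρ y))
      ((fderiv ℝ H (tgtMap ρ x)).comp (tgtL ρ)) x := by
    have := (hH (tgtMap ρ x)).hasFDerivAt.comp x ((tgtL ρ).hasFDerivAt (x := x))
    exact this
  have h : HasFDerivAt (fun y => lam ρ H y v)
      ((v 2 • (ContinuousLinearMap.proj 0 : Tot9 →L[ℝ] ℝ)
        + v 3 • (ContinuousLinearMap.proj 1 : Tot9 →L[ℝ] ℝ)
        + v 6 • (ContinuousLinearMap.proj 4 : Tot9 →L[ℝ] ℝ)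
        + v 7 • (ContinuousLinearMap.proj 5 : Tot9 →L[ℝ] ℝ)
        + v 8 • ((fderiv ℝ H (srcMap ρ x)).comp (srcL ρ))
        - v 8 • ((fderiv ℝ H (tgtMap ρ x)).comp (tgtL ρ)))) x := by
    unfold lam
    exact (((((((hproj 0).mul_const (v 2)).add ((hproj 1).mul_const (v 3))).add
      ((hproj 4).mul_const (v 6))).add ((hproj 5).mul_const (v 7))).add
      (hsrc.mul_const (v 8))).sub (htgt.mul_const (v 8)))
  rw [h.fderiv]
  simp [srcMap_eq_srcL, tgtMap_eq_tgtL, mul_comm]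

/-- `α₀*ω - β₀*ω = d(P₁dQ₁ + P₂dQ₂ + p₁dq₁ + p₂dq₂ + α₀*(Hdt) - β₀*(Hdt))`;
in particular `α₀*ω - β₀*ω` is an exact 2-form. -/
theorem alpha_pullback_sub_beta_pullback_exact
    (ρ : ℝ) (hρ : Irrational ρ) (hρ0 : ρ ≠ 0)
    (H : Base5 → ℝ) (hH : ContDiff ℝ (⊤ : ℕ∞) H) :
    (∀ (x u v : Tot9),
      pb2 (srcMap ρ) (omega2 ρ H) x u v - pb2 (tgtMap ρ) (omega2 ρ H) x u v
        = d1 (lam ρ H) x u v) ∧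
    ∃ μ : Tot9 → Tot9 → ℝ,
      ∀ (x u v : Tot9),
        pb2 (srcMap ρ) (omega2 ρ H) x u v - pb2 (tgtMap ρ) (omega2 ρ H) x u v
          = d1 μ x u v := by
  have hHd : Differentiable ℝ H := hH.differentiable (by simp)
  have main : ∀ (x u v : Tot9),
      pb2 (srcMap ρ) (omega2 ρ H) x u v - pb2 (tgtMap ρ) (omega2 ρ H) x u v
        = d1 (lam ρ H) x u v := by
    intro x u v
    unfold pb2 d1
    rw [fderiv_srcMap, fderiv_tgtMap, fderiv_lam ρ H hHd x u v, fderiv_lam ρ H hHd x v u]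
    rw [← srcMap_eq_srcL, ← tgtMap_eq_tgtL]
    unfold omega2
    simp only [srcMap, tgtMap, Matrix.cons_val_zero, Matrix.cons_val_one, Matrix.head_cons,
      Matrix.cons_val_two, Matrix.tail_cons, Matrix.cons_val_three, Matrix.cons_val_four]
    field_simp
    ring
  exact ⟨main, lam ρ H, main⟩

end
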